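/- arXiv:0806.3063 — 2 statements merged into one kernel-verified Lean document; each statement's English description precedes it below -/
import Mathlib

section
/- Let 𝔨 be the Lie algebra of a compact Lie group with an Ad-invariant inner product, 𝔨_ℂ its complexification, and {X_k} an orthonormal basis of 𝔨. In the universal enveloping algebra of 𝔨_ℂ (with J denoting multiplication by i on 𝔨_ℂ, viewing X_k and JX_k as elements), the element Σ_k ((JX_k)² − X_k²) commutes with every X_j and every JX_j. -/
/-- The Casimir-type element `∑ k ((J X_k)² − X_k²)` of the universal enveloping
algebra (over `ℝ`) of the complexification `L = 𝔨_ℂ`, where `J` is multiplication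
by `i` and `X` is an orthonormal basis of the compact real form `𝔨`. -/
noncomputable def casimirElement {L : Type*} [LieRing L] [LieAlgebra ℝ L]
    (J : L →ₗ[ℝ] L) {n : ℕ} (X : Fin n → L) : UniversalEnvelopingAlgebra ℝ L :=
  ∑ k : Fin n,
    ((UniversalEnvelopingAlgebra.ι ℝ (J (X k)) : UniversalEnvelopingAlgebra ℝ L) ^ 2
      - (UniversalEnvelopingAlgebra.ι ℝ (X k) : UniversalEnvelopingAlgebra ℝ L) ^ 2)

/-! Write the real basis `(J X_k, X_k)` of `𝔨_ℂ` as one family `x` indexed by `Fin n ⊕ Fin n`,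
with signs `ε = (1, -1)`, so that the element is `∑ ε_p x_p²`. For `w = X_j` or `w = J X_j` the
matrix `a` of `ad w` in this basis is built from the structure constants `c k j l`, and total
antisymmetry of `c` makes `ε_p a_pq` antisymmetric in `p, q`. Hence
`⁅∑ ε_p x_p², w⁆ = ∑ ε_p a_pq (x_p x_q + x_q x_p)` pairs an antisymmetric array with a symmetric
one and vanishes. -/

open Matrix

theorem Fintype.sum_sum_eq_zero_of_antisymm {ι M : Type*} [Fintype ι] [AddCommGroup M]
    [IsAddTorsionFree M] (f : ι → ι → M) (hf : ∀ k l, f k l = -f l k) :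
    ∑ k, ∑ l, f k l = 0 :=
  self_eq_neg.mp <| calc
    ∑ k, ∑ l, f k l = ∑ l, ∑ k, f k l := Finset.sum_comm
    _ = -∑ l, ∑ k, f l k := by
      simp only [← Finset.sum_neg_distrib]
      exact Finset.sum_congr rfl fun l _ => Finset.sum_congr rfl fun k _ => hf k l

section Casimir

variable {ι R A : Type*} [Fintype ι] [CommRing R] [Ring A] [Algebra R A] [IsAddTorsionFree A]

attribute [local instance] LieRing.ofAssociativeRing

theorem commute_sum_smul_sq_of_lie_eq_sum (ε : ι → R) (y : ι → A) (v : A) (a : ι → ι → R)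
    (hy : ∀ k, ⁅y k, v⁆ = ∑ l, a k l • y l) (ha : ∀ k l, ε k * a k l = -(ε l * a l k)) :
    Commute (∑ k, ε k • y k ^ 2) v := by
  have lie_sq : ∀ k, ⁅y k ^ 2, v⁆ = y k * ⁅y k, v⁆ + ⁅y k, v⁆ * y k := fun k => by
    simp only [Ring.lie_def]; noncomm_ring
  rw [commute_iff_lie_eq]
  calc ⁅∑ k, ε k • y k ^ 2, v⁆
      = ∑ k, ∑ l, (ε k * a k l) • (y k * y l + y l * y k) := by
        simp only [sum_lie, smul_lie, lie_sq, hy, Finset.mul_sum, Finset.sum_mul,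
          mul_smul_comm, smul_mul_assoc, ← Finset.sum_add_distrib, Finset.smul_sum, smul_add,
          mul_smul]
    _ = 0 := Fintype.sum_sum_eq_zero_of_antisymm _ fun k l => by
        rw [ha, neg_smul, add_comm]

variable {L : Type*} [LieRing L] [LieAlgebra R L]

theorem LieHom.commute_sum_smul_sq_map (f : L →ₗ⁅R⁆ A) (ε : ι → R) (x : ι → L) (w : L)
    (a : ι → ι → R) (hx : ∀ k, ⁅x k, w⁆ = ∑ l, a k l • x l)
    (ha : ∀ k l, ε k * a k l = -(ε l * a l k)) :
    Commute (∑ k, ε k • f (x k) ^ 2) (f w) :=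
  commute_sum_smul_sq_of_lie_eq_sum ε (f ∘ x) (f w) a
    (fun k => by simp only [Function.comp_apply, ← LieHom.map_lie, hx, map_sum, map_smul]) ha

end Casimir

section Complexification

variable {L : Type*} [LieRing L] [LieAlgebra ℝ L] (J : L →ₗ[ℝ] L) {n : ℕ} (X : Fin n → L)

theorem casimirElement_eq_sum_sum_type :
    casimirElement J X = ∑ p : Fin n ⊕ Fin n,
      Sum.elim (fun _ => (1 : ℝ)) (fun _ => -1) p •
        UniversalEnvelopingAlgebra.ι ℝ (Sum.elim (J ∘ X) X p) ^ 2 := by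
  simp [casimirElement, Fintype.sum_sum_type, sub_eq_add_neg, Finset.sum_add_distrib]

variable {J} (hJb : ∀ x y : L, ⁅J x, y⁆ = J ⁅x, y⁆)
include hJb

theorem lie_apply_right_eq_of_apply_lie_left (x y : L) : ⁅x, J y⁆ = J ⁅x, y⁆ := by
  rw [← lie_skew, hJb, ← map_neg, lie_skew]

variable {X} {c : Fin n → Fin n → Fin n → ℝ} (hbrac : ∀ j k, ⁅X j, X k⁆ = ∑ l, c j k l • X l)
include hbrac

theorem sum_elim_lie_eq_sum_fromBlocks (j : Fin n) (p : Fin n ⊕ Fin n) :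
    ⁅Sum.elim (J ∘ X) X p, X j⁆ =
      ∑ q, fromBlocks (of fun k l => c k j l) 0 0 (of fun k l => c k j l) p q •
        Sum.elim (J ∘ X) X q := by
  rcases p with k | k <;> simp [Fintype.sum_sum_type, hJb, hbrac]

theorem sum_elim_lie_J_eq_sum_fromBlocks (hJ2 : ∀ x, J (J x) = -x) (j : Fin n)
    (p : Fin n ⊕ Fin n) :
    ⁅Sum.elim (J ∘ X) X p, J (X j)⁆ =
      ∑ q, fromBlocks 0 (-of fun k l => c k j l) (of fun k l => c k j l) 0 p q •
        Sum.elim (J ∘ X) X q := by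
  rcases p with k | k <;>
    simp [Fintype.sum_sum_type, hJb, lie_apply_right_eq_of_apply_lie_left hJb, hbrac, hJ2]

end Complexification

/-- Let `L = 𝔨_ℂ` be the complexification of the Lie algebra `𝔨` of a compact group,
regarded as a real Lie algebra, with complex structure `J` (multiplication by `i`),
and let `X₁, …, Xₙ` be an orthonormal basis of `𝔨` for an Ad-invariant inner product,
so that the structure constants `c j k l` (defined by `⁅X j, X k⁆ = ∑ l, c j k l • X l`)
are antisymmetric in each pair of indices.  Then, in the universal enveloping algebra
of `L` over `ℝ`, the element `∑ k ((J X_k)² − X_k²)` commutes with every `X j` and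
with every `J (X j)`. -/
theorem casimir_commutes
    {L : Type*} [LieRing L] [LieAlgebra ℝ L]
    (J : L →ₗ[ℝ] L) (hJ2 : ∀ x, J (J x) = -x)
    (hJb : ∀ x y : L, ⁅J x, y⁆ = J ⁅x, y⁆)
    {n : ℕ} (X : Fin n → L) (c : Fin n → Fin n → Fin n → ℝ)
    (hbrac : ∀ j k, ⁅X j, X k⁆ = ∑ l, c j k l • X l)
    (hanti₁ : ∀ j k l, c j k l = - c k j l)
    (hanti₂ : ∀ j k l, c j k l = - c j l k)
    (j : Fin n) :
    Commute (casimirElement J X)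
      (UniversalEnvelopingAlgebra.ι ℝ (X j) : UniversalEnvelopingAlgebra ℝ L)
    ∧
    Commute (casimirElement J X)
      (UniversalEnvelopingAlgebra.ι ℝ (J (X j)) : UniversalEnvelopingAlgebra ℝ L) := by
  have hc : ∀ k l, c k j l = -c l j k := fun k l => by
    linarith [hanti₁ k j l, hanti₂ j k l, hanti₁ j l k]
  have : IsAddTorsionFree (UniversalEnvelopingAlgebra ℝ L) := .of_isTorsionFree ℝ _
  rw [casimirElement_eq_sum_sum_type]
  constructor
  · refine (UniversalEnvelopingAlgebra.ι ℝ).commute_sum_smul_sq_map _ _ _ _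
      (sum_elim_lie_eq_sum_fromBlocks hJb hbrac j) ?_
    rintro (k | k) (l | l) <;> simp [hc k l]
  · refine (UniversalEnvelopingAlgebra.ι ℝ).commute_sum_smul_sq_map _ _ _ _
      (sum_elim_lie_J_eq_sum_fromBlocks hJb hbrac hJ2 j) ?_
    rintro (k | k) (l | l) <;> simp [hc k l]
end

section
/- Let θ_ℂ denote the solution map of the (deterministic analogue of the) differential equation dg_t = g_t (dA_t + i dB_t) on K_ℂ, and θ the solution of dx_t = x_t dA_t on K, for smooth paths A, B in 𝔨 with A_0 = B_0 = 0. Define B^{θ(A)}_t = ∫_0^t Ad_{θ(A)_s}(dB_s). Then θ_ℂ(A + iB)_t = θ_ℂ(i B^{θ(A)})_t · θ(A)_t for all t. -/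
/-!
Both `g` and `h * x` solve the linear equation `y' = y (A' + i B')` with `y 0 = 1`: by the
product rule `(h x)' = h (x (i B') x⁻¹) x + h x A' = h x (A' + i B')`. Solutions of a linear
equation with continuous coefficient are unique, since `y ↦ y c` is Lipschitz with constant
`‖c‖`, which is bounded on compact intervals.
-/

open Set

lemma lipschitzWith_mul_right {α : Type*} [NonUnitalSeminormedRing α] (a : α) :
    LipschitzWith ‖a‖₊ (· * a) :=
  LipschitzWith.of_dist_le_mul fun y z => by
    rw [dist_eq_norm, dist_eq_norm, ← sub_mul, mul_comm (‖a‖₊ : ℝ)]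
    exact norm_mul_le _ _

theorem eq_of_hasDerivAt_mul_right {𝒜 : Type*} [NormedRing 𝒜] [NormedSpace ℝ 𝒜]
    {c f g : ℝ → 𝒜} (hc : Continuous c)
    (hf : ∀ t, HasDerivAt f (f t * c t) t) (hg : ∀ t, HasDerivAt g (g t * c t) t)
    {t₀ : ℝ} (h₀ : f t₀ = g t₀) : f = g := by
  funext t
  obtain ⟨a, b, ht, ht₀⟩ : ∃ a b, t ∈ Ioo a b ∧ t₀ ∈ Ioo a b :=
    ⟨min t t₀ - 1, max t t₀ + 1, by grind⟩
  obtain ⟨C, hC⟩ :=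
    (isCompact_Icc (a := a) (b := b)).exists_bound_of_continuousOn hc.continuousOn
  have hlip : ∀ s ∈ Ioo a b, LipschitzOnWith C.toNNReal (· * c s) univ := fun s hs =>
    ((lipschitzWith_mul_right (c s)).weaken <| NNReal.coe_le_coe.1 <|
      (hC s (Ioo_subset_Icc_self hs)).trans C.le_coe_toNNReal).lipschitzOnWith
  exact ODE_solution_unique_of_mem_Ioo hlip ht₀ (fun s _ => ⟨hf s, mem_univ _⟩)
    (fun s _ => ⟨hg s, mem_univ _⟩) h₀ ht

theorem HasDerivAt.mul_of_hasDerivAt_conj {𝕜 𝔸 : Type*} [NontriviallyNormedField 𝕜]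
    [NormedRing 𝔸] [NormedAlgebra 𝕜 𝔸] {h x : 𝕜 → 𝔸} {a b y : 𝔸} {t : 𝕜}
    (hh : HasDerivAt h (h t * (x t * b * y)) t) (hx : HasDerivAt x (x t * a) t)
    (hy : y * x t = 1) : HasDerivAt (fun s => h s * x s) (h t * x t * (a + b)) t := by
  refine (hh.mul hx).congr_deriv ?_
  simp only [mul_add, mul_assoc, hy, mul_one]
  exact add_comm _ _

theorem theta_complex_decomposition_general
    {𝒜 : Type*} [NormedRing 𝒜] [NormedAlgebra ℂ 𝒜]
    (A' B' : ℝ → 𝒜) (hA' : Continuous A') (hB' : Continuous B')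
    (x xi g h : ℝ → 𝒜)
    (hx0 : x 0 = 1) (hxinv : ∀ t, x t * xi t = 1 ∧ xi t * x t = 1)
    (hx : ∀ t, HasDerivAt x (x t * A' t) t)
    (hg0 : g 0 = 1)
    (hg : ∀ t, HasDerivAt g (g t * (A' t + Complex.I • B' t)) t)
    (hh0 : h 0 = 1)
    (hh : ∀ t, HasDerivAt h (h t * (Complex.I • (x t * B' t * xi t))) t)
    (t : ℝ) :
    g t = h t * x t := by
  have hhx : ∀ s, HasDerivAt (fun s => h s * x s) (h s * x s * (A' s + Complex.I • B' s)) s :=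
    fun s => HasDerivAt.mul_of_hasDerivAt_conj
      (by simpa only [smul_mul_assoc, mul_smul_comm] using hh s) (hx s) (hxinv s).2
  have hgu := eq_of_hasDerivAt_mul_right (hA'.add (hB'.const_smul Complex.I)) (t₀ := 0) hg hhx
    (by simp only [hg0, hh0, hx0, mul_one])
  exact congrFun hgu t

/-- The decomposition `θ_ℂ(A + iB) = θ_ℂ(i B^{θ(A)}) · θ(A)` for the solution maps of
the left logarithmic-derivative equations on (a Banach-algebra model of) `K_ℂ`.
Here `x = θ(A)` solves `x' = x A'`, `x(0) = 1`, with pointwise inverse `xi`;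
`g = θ_ℂ(A + iB)` solves `g' = g (A' + i B')`, `g(0) = 1`; and
`h = θ_ℂ(i B^{θ(A)})` solves `h' = h · i Ad_{x}(B') = h · i (x B' x⁻¹)`, `h(0) = 1`.
Then `g t = h t * x t` for all `t`. -/
theorem theta_complex_decomposition
    {𝒜 : Type*} [NormedRing 𝒜] [NormedAlgebra ℂ 𝒜] [CompleteSpace 𝒜]
    (A' B' : ℝ → 𝒜) (hA' : Continuous A') (hB' : Continuous B')
    (x xi g h : ℝ → 𝒜)
    (hx0 : x 0 = 1) (hxinv : ∀ t, x t * xi t = 1 ∧ xi t * x t = 1)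
    (hx : ∀ t, HasDerivAt x (x t * A' t) t)
    (hg0 : g 0 = 1)
    (hg : ∀ t, HasDerivAt g (g t * (A' t + Complex.I • B' t)) t)
    (hh0 : h 0 = 1)
    (hh : ∀ t, HasDerivAt h (h t * (Complex.I • (x t * B' t * xi t))) t)
    (t : ℝ) :
    g t = h t * x t :=
  theta_complex_decomposition_general A' B' hA' hB' x xi g h hx0 hxinv hx hg0 hg hh0 hh t
end
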